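/- arXiv:2307.03989 — 2 statements merged into one kernel-verified Lean document; each statement's English description precedes it below -/
import Mathlib

section
/- Let 𝔲 be a C¹ solution of ∂ₜ𝔲 − Σᵢ 𝔞ᵢ∂_{yᵢ}𝔲 = −i𝔅𝔲 with 𝔟 := i𝔞₁𝔞₂𝔞₃, where the 𝔞ᵢ satisfy the standard relations and 𝔅 is self-adjoint and commutes with each 𝔞ᵢ. Then ∂ₜ(𝔲†𝔟𝔲) − Σᵢ ∂_{yᵢ}(𝔲†𝔟𝔞ᵢ𝔲) = 0. -/
open Matrix

/-- Partial derivative in the time variable. -/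
noncomputable def pt {α : Type*} [NormedAddCommGroup α] [NormedSpace ℝ α]
    (f : ℝ → ℝ → ℝ → ℝ → α) (t y1 y2 y3 : ℝ) : α :=
  deriv (fun s => f s y1 y2 y3) t

/-- Partial derivative in the first space variable. -/
noncomputable def p1 {α : Type*} [NormedAddCommGroup α] [NormedSpace ℝ α]
    (f : ℝ → ℝ → ℝ → ℝ → α) (t y1 y2 y3 : ℝ) : α :=
  deriv (fun s => f t s y2 y3) y1

/-- Partial derivative in the second space variable. -/
noncomputable def p2 {α : Type*} [NormedAddCommGroup α] [NormedSpace ℝ α]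
    (f : ℝ → ℝ → ℝ → ℝ → α) (t y1 y2 y3 : ℝ) : α :=
  deriv (fun s => f t y1 s y3) y2

/-- Partial derivative in the third space variable. -/
noncomputable def p3 {α : Type*} [NormedAddCommGroup α] [NormedSpace ℝ α]
    (f : ℝ → ℝ → ℝ → ℝ → α) (t y1 y2 y3 : ℝ) : α :=
  deriv (fun s => f t y1 y2 s) y3

/-! Writing `v = 𝔲`, the derivative of a quadratic form `v†Mv` in a direction is the polar form
`d†Mv + v†Md` of the derivative `d` of `v`. Substituting `∂ₜv = Σᵢ 𝔞ᵢ∂ᵢv − i𝔅v` into the time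
derivative of `v†𝔟v`, each term `𝔞ᵢ∂ᵢv` contributes exactly `∂ᵢ(v†𝔟𝔞ᵢv)` because `𝔞ᵢ` is
self-adjoint and commutes with `𝔟`, while the mass term contributes `i v†(𝔅𝔟 − 𝔟𝔅)v = 0`. -/

theorem commute_mul_mul_of_anticommute {R : Type*} [Ring R] (a : Fin 3 → R)
    (hanti : ∀ i j, i ≠ j → a i * a j = -(a j * a i)) (i : Fin 3) :
    Commute (a i) (a 0 * a 1 * a 2) := by
  have swap : ∀ i j, i ≠ j → ∀ x, a i * (a j * x) = -(a j * (a i * x)) := fun i j hij x => by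
    rw [← mul_assoc, hanti i j hij, neg_mul, mul_assoc]
  obtain rfl | rfl | rfl : i = 0 ∨ i = 1 ∨ i = 2 := by omega
  all_goals
    simp only [Commute, SemiconjBy, mul_assoc, hanti 2 0 (by decide), hanti 2 1 (by decide),
      swap 1 0 (by decide), swap 2 0 (by decide), swap 2 1 (by decide), mul_neg, neg_neg]

section PolarForm

variable {n : Type*} [Fintype n]

def polarForm (M : Matrix n n ℂ) (v w : n → ℂ) : ℂ :=
  star w ⬝ᵥ M *ᵥ v + star v ⬝ᵥ M *ᵥ w

theorem hasDerivAt_star_dotProduct_mulVec (M : Matrix n n ℂ) {f : ℝ → n → ℂ} {f' : n → ℂ}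
    {x : ℝ} (hf : HasDerivAt f f' x) :
    HasDerivAt (fun s => star (f s) ⬝ᵥ M *ᵥ f s) (polarForm M (f x) f') x := by
  have hcoord : ∀ j, HasDerivAt (fun s => f s j) (f' j) x := hasDerivAt_pi.mp hf
  simp only [polarForm, dotProduct, mulVec, Pi.star_apply, ← Finset.sum_add_distrib]
  exact HasDerivAt.fun_sum fun j _ =>
    (hcoord j).star.mul (HasDerivAt.fun_sum fun k _ => (hcoord k).const_mul (M j k))

theorem polarForm_add (M : Matrix n n ℂ) (v w w' : n → ℂ) :
    polarForm M v (w + w') = polarForm M v w + polarForm M v w' := by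
  simp only [polarForm, star_add, add_dotProduct, mulVec_add, dotProduct_add]
  ring

theorem polarForm_mulVec {M A : Matrix n n ℂ} (hA : Aᴴ = A) (hMA : Commute M A) (v w : n → ℂ) :
    polarForm M v (A *ᵥ w) = polarForm (M * A) v w := by
  simp only [polarForm, star_mulVec, hA, dotProduct_mulVec, vecMul_vecMul, mulVec_mulVec, hMA.eq]

theorem polarForm_smul_mulVec_self {M B : Matrix n n ℂ} (hB : Bᴴ = B) (hMB : Commute M B)
    {c : ℂ} (hc : star c = -c) (v : n → ℂ) : polarForm M v (c • B *ᵥ v) = 0 := by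
  simp only [polarForm, star_smul, star_mulVec, hB, hc, mulVec_smul, smul_vecMul, smul_dotProduct,
    dotProduct_smul, dotProduct_mulVec, vecMul_vecMul, mulVec_mulVec, hMB.eq, smul_eq_mul]
  ring

theorem polarForm_sub_eq_zero_of_dirac (a : Fin 3 → Matrix n n ℂ) (hsa : ∀ i, (a i)ᴴ = a i)
    {B b : Matrix n n ℂ} (hB : Bᴴ = B) (hba : ∀ i, Commute b (a i)) (hbB : Commute b B)
    {v d₀ d₁ d₂ d₃ : n → ℂ}
    (hdirac : d₀ - a 0 *ᵥ d₁ - a 1 *ᵥ d₂ - a 2 *ᵥ d₃ = (-Complex.I) • B *ᵥ v) :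
    polarForm b v d₀ - polarForm (b * a 0) v d₁ - polarForm (b * a 1) v d₂
      - polarForm (b * a 2) v d₃ = 0 := by
  rw [sub_sub, sub_sub, sub_eq_iff_eq_add'] at hdirac
  rw [hdirac, polarForm_add, polarForm_smul_mulVec_self hB hbB (by simp), polarForm_add,
    polarForm_add, polarForm_mulVec (hsa 0) (hba 0), polarForm_mulVec (hsa 1) (hba 1),
    polarForm_mulVec (hsa 2) (hba 2)]
  ring

end PolarForm

section Slices

variable {E : Type*} [NormedAddCommGroup E] [NormedSpace ℝ E] {u : ℝ → ℝ → ℝ → ℝ → E}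

theorem hasDerivAt_pt
    (hu : Differentiable ℝ (fun p : ℝ × ℝ × ℝ × ℝ => u p.1 p.2.1 p.2.2.1 p.2.2.2))
    (t y1 y2 y3 : ℝ) : HasDerivAt (fun s => u s y1 y2 y3) (pt u t y1 y2 y3) t :=
  ((hu _).comp t (by fun_prop : DifferentiableAt ℝ (fun s : ℝ => (s, y1, y2, y3)) t)).hasDerivAt

theorem hasDerivAt_p1
    (hu : Differentiable ℝ (fun p : ℝ × ℝ × ℝ × ℝ => u p.1 p.2.1 p.2.2.1 p.2.2.2))
    (t y1 y2 y3 : ℝ) : HasDerivAt (fun s => u t s y2 y3) (p1 u t y1 y2 y3) y1 :=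
  ((hu _).comp y1 (by fun_prop : DifferentiableAt ℝ (fun s : ℝ => (t, s, y2, y3)) y1)).hasDerivAt

theorem hasDerivAt_p2
    (hu : Differentiable ℝ (fun p : ℝ × ℝ × ℝ × ℝ => u p.1 p.2.1 p.2.2.1 p.2.2.2))
    (t y1 y2 y3 : ℝ) : HasDerivAt (fun s => u t y1 s y3) (p2 u t y1 y2 y3) y2 :=
  ((hu _).comp y2 (by fun_prop : DifferentiableAt ℝ (fun s : ℝ => (t, y1, s, y3)) y2)).hasDerivAt

theorem hasDerivAt_p3
    (hu : Differentiable ℝ (fun p : ℝ × ℝ × ℝ × ℝ => u p.1 p.2.1 p.2.2.1 p.2.2.2))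
    (t y1 y2 y3 : ℝ) : HasDerivAt (fun s => u t y1 y2 s) (p3 u t y1 y2 y3) y3 :=
  ((hu _).comp y3 (by fun_prop : DifferentiableAt ℝ (fun s : ℝ => (t, y1, y2, s)) y3)).hasDerivAt

end Slices

theorem dirac_b_conservation_general (a : Fin 3 → Matrix (Fin 4) (Fin 4) ℂ)
    (hsa : ∀ i, (a i)ᴴ = a i)
    (hanti : ∀ i j, i ≠ j → a i * a j = -(a j * a i))
    (B : ℝ → ℝ → ℝ → ℝ → Matrix (Fin 4) (Fin 4) ℂ)
    (hB : ∀ t y1 y2 y3, (B t y1 y2 y3)ᴴ = B t y1 y2 y3)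
    (hBcomm : ∀ i t y1 y2 y3, a i * B t y1 y2 y3 = B t y1 y2 y3 * a i)
    (u : ℝ → ℝ → ℝ → ℝ → (Fin 4 → ℂ))
    (hu : ContDiff ℝ 1 (fun p : ℝ × ℝ × ℝ × ℝ => u p.1 p.2.1 p.2.2.1 p.2.2.2))
    (hdirac : ∀ t y1 y2 y3,
      pt u t y1 y2 y3 - (a 0).mulVec (p1 u t y1 y2 y3) - (a 1).mulVec (p2 u t y1 y2 y3)
          - (a 2).mulVec (p3 u t y1 y2 y3)
        = (-Complex.I) • (B t y1 y2 y3).mulVec (u t y1 y2 y3))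
    (b : Matrix (Fin 4) (Fin 4) ℂ) (hbdef : b = Complex.I • (a 0 * a 1 * a 2)) :
    ∀ t y1 y2 y3,
      pt (fun t y1 y2 y3 => star (u t y1 y2 y3) ⬝ᵥ b.mulVec (u t y1 y2 y3)) t y1 y2 y3
        - p1 (fun t y1 y2 y3 => star (u t y1 y2 y3) ⬝ᵥ (b * a 0).mulVec (u t y1 y2 y3)) t y1 y2 y3
        - p2 (fun t y1 y2 y3 => star (u t y1 y2 y3) ⬝ᵥ (b * a 1).mulVec (u t y1 y2 y3)) t y1 y2 y3
        - p3 (fun t y1 y2 y3 => star (u t y1 y2 y3) ⬝ᵥ (b * a 2).mulVec (u t y1 y2 y3)) t y1 y2 y3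
        = 0 := by
  have hba : ∀ i, Commute b (a i) := fun i => by
    rw [hbdef]
    exact (commute_mul_mul_of_anticommute a hanti i).symm.smul_left Complex.I
  have hbB : ∀ t y1 y2 y3, Commute b (B t y1 y2 y3) := fun t y1 y2 y3 => by
    rw [hbdef]
    exact ((Commute.mul_left (hBcomm 0 t y1 y2 y3) (hBcomm 1 t y1 y2 y3)).mul_left
      (hBcomm 2 t y1 y2 y3)).smul_left Complex.I
  have hud := hu.differentiable one_ne_zero
  intro t y1 y2 y3
  simp only [pt, p1, p2, p3]
  rw [(hasDerivAt_star_dotProduct_mulVec _ (hasDerivAt_pt hud t y1 y2 y3)).deriv,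
    (hasDerivAt_star_dotProduct_mulVec _ (hasDerivAt_p1 hud t y1 y2 y3)).deriv,
    (hasDerivAt_star_dotProduct_mulVec _ (hasDerivAt_p2 hud t y1 y2 y3)).deriv,
    (hasDerivAt_star_dotProduct_mulVec _ (hasDerivAt_p3 hud t y1 y2 y3)).deriv]
  exact polarForm_sub_eq_zero_of_dirac a hsa (hB t y1 y2 y3) hba (hbB t y1 y2 y3)
    (hdirac t y1 y2 y3)

/-- ∂ₜ(𝔲†𝔟𝔲) − Σᵢ ∂_{yᵢ}(𝔲†𝔟𝔞ᵢ𝔲) = 0, with 𝔟 = i𝔞₁𝔞₂𝔞₃. -/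
theorem dirac_b_conservation (a : Fin 3 → Matrix (Fin 4) (Fin 4) ℂ)
    (hsa : ∀ i, (a i)ᴴ = a i)
    (hsq : ∀ i, a i * a i = 1)
    (hanti : ∀ i j, i ≠ j → a i * a j = -(a j * a i))
    (B : ℝ → ℝ → ℝ → ℝ → Matrix (Fin 4) (Fin 4) ℂ)
    (hB : ∀ t y1 y2 y3, (B t y1 y2 y3)ᴴ = B t y1 y2 y3)
    (hBcomm : ∀ i t y1 y2 y3, a i * B t y1 y2 y3 = B t y1 y2 y3 * a i)
    (u : ℝ → ℝ → ℝ → ℝ → (Fin 4 → ℂ))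
    (hu : ContDiff ℝ 1 (fun p : ℝ × ℝ × ℝ × ℝ => u p.1 p.2.1 p.2.2.1 p.2.2.2))
    (hdirac : ∀ t y1 y2 y3,
      pt u t y1 y2 y3 - (a 0).mulVec (p1 u t y1 y2 y3) - (a 1).mulVec (p2 u t y1 y2 y3)
          - (a 2).mulVec (p3 u t y1 y2 y3)
        = (-Complex.I) • (B t y1 y2 y3).mulVec (u t y1 y2 y3))
    (b : Matrix (Fin 4) (Fin 4) ℂ) (hbdef : b = Complex.I • (a 0 * a 1 * a 2)) :
    ∀ t y1 y2 y3,
      pt (fun t y1 y2 y3 => star (u t y1 y2 y3) ⬝ᵥ b.mulVec (u t y1 y2 y3)) t y1 y2 y3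
        - p1 (fun t y1 y2 y3 => star (u t y1 y2 y3) ⬝ᵥ (b * a 0).mulVec (u t y1 y2 y3)) t y1 y2 y3
        - p2 (fun t y1 y2 y3 => star (u t y1 y2 y3) ⬝ᵥ (b * a 1).mulVec (u t y1 y2 y3)) t y1 y2 y3
        - p3 (fun t y1 y2 y3 => star (u t y1 y2 y3) ⬝ᵥ (b * a 2).mulVec (u t y1 y2 y3)) t y1 y2 y3
        = 0 :=
  dirac_b_conservation_general a hsa hanti B hB hBcomm u hu hdirac b hbdef
end

section
/- Let ρ : ℝ × ℝ³ → (0,∞) be C¹ satisfying ∂ₜρ + div(ρv) = 0 for a C¹ vector field v with flow Φ, and let y(t,·) be a C¹ family of maps satisfying y(t, Φ(t;x)) = y₀(x) with y₀(x) := (x₁, x₂, ∫₀^{x₃} ρ(0, x₁, x₂, σ)dσ). Then det((∂y/∂x)(t, z)) = ρ(t, z) for all t and all z in the range of Φ(t;·). -/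
/-!
Fix `x` and let `γ(s) = Φ(s;x)`. The solution `U` of the variational equation
`U' = D_z v(s, γ(s)) ∘ U`, `U(0) = id`, is the derivative of `Φ(s;·)` at `x` (a Grönwall
estimate), so differentiating `y(t, Φ(t;x)) = y₀(x)` gives `D_z y(t, γ(t)) ∘ U(t) = Dy₀(x)`,
and `det Dy₀(x) = ρ(0,x)` because `Dy₀(x)` is lower triangular. By Liouville's formula
`(det U)' = (div v) det U`, while the continuity equation gives `(ρ ∘ γ)' = -(div v) (ρ ∘ γ)`;
hence `ρ(t, γ(t)) det U(t) = ρ(0,x) ≠ 0`, and dividing gives the claim. Negative times reduce to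
positive ones by reversing time.
-/

/-- Divergence of a time-dependent vector field on ℝ³. -/
noncomputable def divg (v : ℝ → (Fin 3 → ℝ) → (Fin 3 → ℝ)) (t : ℝ) (z : Fin 3 → ℝ) : ℝ :=
  ∑ i, deriv (fun s => v t (Function.update z i s) i) (z i)

/-- Jacobian determinant of a map on ℝ³ at a point. -/
noncomputable def jacDet (f : (Fin 3 → ℝ) → (Fin 3 → ℝ)) (x : Fin 3 → ℝ) : ℝ :=
  LinearMap.det (fderiv ℝ f x).toLinearMap

open Set Metric Filter Topology
open scoped NNReal

theorem IsCompact.exists_forall_dist_lt_of_continuous {α β : Type*} [PseudoMetricSpace α]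
    [PseudoMetricSpace β] {s : Set α} (hs : IsCompact s) {f : α → β} (hf : Continuous f)
    {ε : ℝ} (hε : 0 < ε) : ∃ δ > 0, ∀ x ∈ s, ∀ y, dist x y < δ → dist (f x) (f y) < ε := by
  obtain ⟨δ, hδ, h⟩ := Metric.mem_uniformity_dist.1 <|
    hs.uniformContinuousAt_of_continuousAt f (fun x _ => hf.continuousAt) (dist_mem_uniformity hε)
  exact ⟨δ, hδ, fun x hx y hxy => h hxy hx⟩

theorem gronwallBound_zero_eq_mul (K ε x : ℝ) :
    gronwallBound 0 K ε x = ε * gronwallBound 0 K 1 x := by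
  unfold gronwallBound
  split_ifs <;> ring

section Gronwall

variable {E : Type*} [NormedAddCommGroup E] [NormedSpace ℝ E] {v : ℝ → E → E}

theorem IsIntegralCurve.dist_le_mul_exp_of_lipschitzOnWith {f γ : ℝ → E} {K : ℝ≥0} {a b r : ℝ}
    (hf : IsIntegralCurve f v) (hγ : IsIntegralCurve γ v)
    (hv : ∀ t ∈ Icc a b, LipschitzOnWith K (v t) (closedBall (γ t) r))
    (hr : dist (f a) (γ a) * Real.exp (K * (b - a)) < r) :
    ∀ t ∈ Icc a b, dist (f t) (γ t) ≤ dist (f a) (γ a) * Real.exp (K * (t - a)) := by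
  set δ := dist (f a) (γ a)
  have hcont : Continuous fun t => dist (f t) (γ t) := hf.continuous.dist hγ.continuous
  -- Continuous induction: while the two curves are `r`-close, Grönwall applies from there on.
  refine IsClosed.Icc_subset_of_forall_mem_nhdsWithin
    (s := {t | dist (f t) (γ t) ≤ δ * Real.exp (K * (t - a))})
    ((isClosed_le hcont (by fun_prop)).inter isClosed_Icc) (by simp [δ]) ?_
  rintro c ⟨hc, hcab⟩
  have hcr : dist (f c) (γ c) < r := hc.trans_lt <| (mul_le_mul_of_nonneg_left
    (Real.exp_le_exp.2 (by gcongr; exact hcab.2.le)) dist_nonneg).trans_lt hr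
  obtain ⟨d, -, hdmem, hd⟩ := exists_Icc_mem_subset_of_mem_nhdsGE <|
    ((hcont.continuousAt.eventually_lt continuousAt_const hcr).filter_mono nhdsWithin_le_nhds).and
      (Icc_mem_nhdsGE_of_mem hcab)
  have hgron := dist_le_of_trajectories_ODE_of_mem (s := fun t => closedBall (γ t) r)
    (fun t ht => hv t (hd ⟨ht.1, ht.2.le⟩).2) hf.continuous.continuousOn
    (fun t _ => (hf t).hasDerivWithinAt)
    (fun t ht => mem_closedBall.2 (hd ⟨ht.1, ht.2.le⟩).1.le) hγ.continuous.continuousOn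
    (fun t _ => (hγ t).hasDerivWithinAt)
    (fun t _ => mem_closedBall_self (dist_nonneg.trans hcr.le)) hc
  filter_upwards [nhdsWithin_mono _ Ioi_subset_Ici_self hdmem] with t ht
  calc dist (f t) (γ t) ≤ δ * Real.exp (K * (c - a)) * Real.exp (K * (t - c)) := hgron t ht
    _ = δ * Real.exp (K * (t - a)) := by rw [mul_assoc, ← Real.exp_add]; ring_nf

end Gronwall

section LinearODE

variable {E : Type*} [NormedAddCommGroup E] [NormedSpace ℝ E]

theorem IsIntegralCurveOn.piecewise_Icc {v : ℝ → E → E} {f g : ℝ → E} {a c d : ℝ}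
    (hf : IsIntegralCurveOn f v (Icc a c)) (hg : IsIntegralCurveOn g v (Icc c d))
    (hfg : f c = g c) :
    IsIntegralCurveOn (fun s => if s ≤ c then f s else g s) v (Icc a d) := by
  set F : ℝ → E := fun s => if s ≤ c then f s else g s
  have hFf : EqOn F f (Icc a c) := fun s hs => if_pos hs.2
  have hFg : EqOn F g (Icc c d) := fun s hs => by
    rcases hs.1.eq_or_lt with rfl | h
    · simp [F, hfg]
    · exact if_neg h.not_ge
  intro s hs
  have piece : ∀ {k : ℝ → E} {S : Set ℝ}, IsClosed S → IsIntegralCurveOn k v S → EqOn F k S →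
      HasDerivWithinAt F (v s (F s)) S s := by
    intro k S hS hk hFk
    by_cases hsS : s ∈ S
    · rw [hFk hsS]
      exact (hk s hsS).congr hFk (hFk hsS)
    · exact hasDerivWithinAt_iff_hasFDerivWithinAt.2 (.of_notMem_closure (by rwa [hS.closure_eq]))
  refine ((piece isClosed_Icc hf hFf).union (piece isClosed_Icc hg hFg)).mono fun s hs => ?_
  rcases le_or_gt s c with h | h
  exacts [.inl ⟨hs.1, h⟩, .inr ⟨h.le, hs.2⟩]

variable [CompleteSpace E] {G : ℝ → E →L[ℝ] E}

theorem exists_isIntegralCurveOn_clm_Icc (hG : Continuous G) {K : ℝ≥0} (hK : ∀ s, ‖G s‖ ≤ K)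
    {c d : ℝ} (hcd : c ≤ d) (hT : K * (d - c) ≤ 1 / 2) (w : E) :
    ∃ f : ℝ → E, f c = w ∧ IsIntegralCurveOn f (fun s => G s) (Icc c d) := by
  have hPL : IsPicardLindelof (fun s => G s) (⟨c, left_mem_Icc.2 hcd⟩ : Icc c d) w ‖w‖₊ 0
      (2 * K * ‖w‖₊) K :=
    { lipschitzOnWith := fun s _ =>
        ((G s).lipschitz.weaken
          (by rw [← NNReal.coe_le_coe, coe_nnnorm]; exact hK s)).lipschitzOnWith
      continuousOn := fun z _ => (hG.clm_apply continuous_const).continuousOn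
      norm_le := fun s _ z hz => by
        have hz' : ‖z‖ ≤ ‖w‖ + ‖w‖ := norm_le_of_mem_closedBall hz
        calc ‖G s z‖ ≤ ‖G s‖ * ‖z‖ := (G s).le_opNorm z
          _ ≤ K * (‖w‖ + ‖w‖) := by gcongr; exact hK s
          _ = _ := by push_cast; ring
      mul_max_le := by
        simp only [sub_self, max_eq_left (sub_nonneg.2 hcd), NNReal.coe_zero, sub_zero]
        push_cast
        nlinarith [norm_nonneg w] }
  exact hPL.exists_eq_forall_mem_Icc_hasDerivWithinAt₀

theorem exists_isIntegralCurveOn_clm_of_bounded (hG : Continuous G) {K : ℝ≥0}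
    (hK : ∀ s, ‖G s‖ ≤ K) (ξ : E) (n : ℕ) :
    ∃ f : ℝ → E, f 0 = ξ ∧
      IsIntegralCurveOn f (fun s => G s) (Icc 0 (n * (2 * (K + 1) : ℝ)⁻¹)) := by
  set τ : ℝ := (2 * (K + 1))⁻¹
  have hτ : 0 ≤ τ := by positivity
  have hKτ : K * τ ≤ 1 / 2 := by
    rw [← div_eq_mul_inv, div_le_iff₀ (by positivity)]
    linarith
  induction n with
  | zero => simpa using exists_isIntegralCurveOn_clm_Icc hG hK le_rfl (by simp) ξ
  | succ n ih =>
    obtain ⟨f, hf0, hf⟩ := ih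
    obtain ⟨g, hg0, hg⟩ := exists_isIntegralCurveOn_clm_Icc hG hK
      (c := n * τ) (d := (n + 1 : ℕ) * τ) (by gcongr; simp) (by push_cast; ring_nf; linarith)
      (f (n * τ))
    refine ⟨_, ?_, hf.piecewise_Icc hg hg0.symm⟩
    rw [if_pos (by positivity), hf0]

theorem exists_isIntegralCurveOn_clm (hG : Continuous G) (ξ : E) (b : ℝ) :
    ∃ f : ℝ → E, f 0 = ξ ∧ IsIntegralCurveOn f (fun s => G s) (Icc 0 b) := by
  -- Clamping time to `[0, b]` makes the coefficient bounded on all of `ℝ`.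
  set clamp : ℝ → ℝ := fun s => max 0 (min s b)
  have hclamp : ∀ s ∈ Icc 0 b, clamp s = s := fun s hs => by
    simp [clamp, hs.1, hs.2]
  obtain ⟨C, hC⟩ :=
    isCompact_Icc.exists_bound_of_continuousOn (hG.continuousOn (s := Icc 0 (max 0 b)))
  have hbound : ∀ s, ‖G (clamp s)‖ ≤ C.toNNReal := fun s =>
    (hC _ ⟨le_max_left _ _, max_le_max le_rfl (min_le_right _ _)⟩).trans (Real.le_coe_toNNReal C)
  obtain ⟨n, hn⟩ := exists_nat_ge (b * (2 * (C.toNNReal + 1)))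
  have hbn : b ≤ n * (2 * (C.toNNReal + 1) : ℝ)⁻¹ := by
    rw [← div_eq_mul_inv, le_div_iff₀ (by positivity)]
    exact hn
  obtain ⟨f, hf0, hf⟩ := exists_isIntegralCurveOn_clm_of_bounded (G := fun s => G (clamp s))
    (hG.comp (by fun_prop)) hbound ξ n
  refine ⟨f, hf0, fun s hs => ?_⟩
  have := (hf s ⟨hs.1, hs.2.trans hbn⟩).mono (Icc_subset_Icc_right hbn)
  simp only at this ⊢
  rwa [hclamp s hs] at this

end LinearODE

section Linearization

variable {E : Type*} [NormedAddCommGroup E] [NormedSpace ℝ E] {v : ℝ → E → E}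
  {Dv : ℝ → E → E →L[ℝ] E}

theorem exists_forall_mem_closedBall_norm_sub_le (hDv : Continuous fun p : ℝ × E => Dv p.1 p.2)
    {γ : ℝ → E} (hγ : Continuous γ) (a b : ℝ) {ε : ℝ} (hε : 0 < ε) :
    ∃ δ > 0, ∀ t ∈ Icc a b, ∀ z ∈ closedBall (γ t) δ, ‖Dv t z - Dv t (γ t)‖ ≤ ε := by
  obtain ⟨δ, hδ, h⟩ :=
    (isCompact_Icc.image (continuous_id.prodMk hγ)).exists_forall_dist_lt_of_continuous hDv hε
  refine ⟨δ / 2, half_pos hδ, fun t ht z hz => ?_⟩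
  have hclose : dist (t, γ t) (t, z) < δ := by
    rw [Prod.dist_eq, dist_self, dist_comm]
    exact max_lt hδ ((mem_closedBall.1 hz).trans_lt (half_lt_self hδ))
  rw [← dist_eq_norm, dist_comm]
  exact (h _ (mem_image_of_mem _ ht) _ hclose).le

theorem exists_lipschitzOnWith_closedBall (hv : ∀ t z, HasFDerivAt (v t) (Dv t z) z)
    (hDv : Continuous fun p : ℝ × E => Dv p.1 p.2) {γ : ℝ → E} (hγ : Continuous γ) (a b : ℝ) :
    ∃ K : ℝ≥0, ∃ δ > 0, ∀ t ∈ Icc a b, LipschitzOnWith K (v t) (closedBall (γ t) δ) := by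
  obtain ⟨M, hM⟩ := isCompact_Icc.exists_bound_of_continuousOn
    (hDv.comp (continuous_id.prodMk hγ)).continuousOn (s := Icc a b)
  obtain ⟨δ, hδ, hnear⟩ := exists_forall_mem_closedBall_norm_sub_le hDv hγ a b one_pos
  refine ⟨(M + 1).toNNReal, δ, hδ, fun t ht => ?_⟩
  refine (convex_closedBall _ _).lipschitzOnWith_of_nnnorm_hasFDerivWithin_le
    (fun z _ => (hv t z).hasFDerivWithinAt) fun z hz => ?_
  rw [← NNReal.coe_le_coe, coe_nnnorm]
  calc ‖Dv t z‖ ≤ ‖Dv t (γ t)‖ + ‖Dv t z - Dv t (γ t)‖ := norm_le_insert' _ _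
    _ ≤ M + 1 := add_le_add (hM t ht) (hnear t ht z hz)
    _ ≤ _ := Real.le_coe_toNNReal _

theorem exists_forall_norm_linearization_le (hv : ∀ t z, HasFDerivAt (v t) (Dv t z) z)
    (hDv : Continuous fun p : ℝ × E => Dv p.1 p.2) {γ : ℝ → E} (hγ : Continuous γ) (a b : ℝ) {ε : ℝ}
    (hε : 0 < ε) : ∃ δ > 0, ∀ t ∈ Icc a b, ∀ w : E, ‖w‖ ≤ δ →
      ‖v t (γ t + w) - v t (γ t) - Dv t (γ t) w‖ ≤ ε * ‖w‖ := by
  obtain ⟨δ, hδ, hnear⟩ := exists_forall_mem_closedBall_norm_sub_le hDv hγ a b hε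
  refine ⟨δ, hδ, fun t ht w hw => ?_⟩
  have := (convex_closedBall (γ t) δ).norm_image_sub_le_of_norm_hasFDerivWithin_le'
    (fun z _ => (hv t z).hasFDerivWithinAt) (hnear t ht) (mem_closedBall_self hδ.le)
    (by rwa [mem_closedBall, dist_self_add_left])
  rwa [add_sub_cancel_left] at this

theorem norm_flow_sub_linearization_le {Φ : ℝ → E → E} (hΦ : ∀ x, IsIntegralCurve (Φ · x) v)
    (hΦ0 : ∀ x, Φ 0 x = x) {x ξ : E} {b : ℝ} (hb : 0 ≤ b) {u : ℝ → E} (hu0 : u 0 = ξ)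
    (hu : IsIntegralCurveOn u (fun t w => Dv t (Φ t x) w) (Icc 0 b)) {K : ℝ≥0} {δ ε R : ℝ}
    (hlip : ∀ t ∈ Icc 0 b, LipschitzOnWith K (v t) (closedBall (Φ t x) δ))
    (hlin : ∀ t ∈ Icc 0 b, ∀ w : E, ‖w‖ ≤ δ →
      ‖v t (Φ t x + w) - v t (Φ t x) - Dv t (Φ t x) w‖ ≤ ε * ‖w‖)
    (hε : 0 ≤ ε) (hR : ∀ t ∈ Icc 0 b, ‖u t‖ ≤ R) {h : ℝ} (hξ : ‖h‖ * (‖ξ‖ * Real.exp (K * b)) < δ)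
    (hu_small : ‖h‖ * R ≤ δ) :
    ‖Φ b (x + h • ξ) - (Φ b x + h • u b)‖ ≤ ε * (‖h‖ * R) * gronwallBound 0 K 1 b := by
  set γ : ℝ → E := (Φ · x)
  set f : ℝ → E := (Φ · (x + h • ξ))
  -- `η` is an approximate trajectory whose defect is controlled by `hlin`.
  set η : ℝ → E := fun t => γ t + h • u t
  have hhu : ∀ t ∈ Icc 0 b, ‖h • u t‖ ≤ ‖h‖ * R := fun t ht => by
    rw [norm_smul]
    exact mul_le_mul_of_nonneg_left (hR t ht) (norm_nonneg h)
  have hf_near : ∀ t ∈ Icc 0 b, dist (f t) (γ t) ≤ δ := by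
    have hf0 : dist (f 0) (γ 0) * Real.exp (K * (b - 0)) < δ := by
      simpa [f, γ, hΦ0, dist_eq_norm, norm_smul, mul_assoc] using hξ
    intro t ht
    refine ((hΦ _).dist_le_mul_exp_of_lipschitzOnWith (hΦ x) hlip hf0 t ht).trans
      (le_trans ?_ hf0.le)
    gcongr
    exact ht.2
  have hgron := dist_le_of_approx_trajectories_ODE_of_mem (s := fun t => closedBall (γ t) δ)
    (f' := fun t => v t (f t)) (εf := 0) (δ := 0) (g := η)
    (g' := fun t => v t (γ t) + h • Dv t (γ t) (u t)) (εg := ε * (‖h‖ * R))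
    (fun t ht => hlip t (Ico_subset_Icc_self ht)) (hΦ _).continuous.continuousOn
    (fun t _ => (hΦ _ t).hasDerivWithinAt) (fun t _ => (dist_self _).le)
    (fun t ht => mem_closedBall.2 (hf_near t (Ico_subset_Icc_self ht)))
    ((hΦ x).continuous.continuousOn.add (hu.continuousOn.const_smul h))
    (fun t ht => (hΦ x t).hasDerivWithinAt.add <|
      ((hu t (Ico_subset_Icc_self ht)).mono_of_mem_nhdsWithin (Icc_mem_nhdsGE_of_mem ht)).const_smul h)
    (fun t ht => by
      have ht' := Ico_subset_Icc_self ht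
      calc dist (v t (γ t) + h • Dv t (γ t) (u t)) (v t (η t))
          = ‖v t (γ t + h • u t) - v t (γ t) - Dv t (γ t) (h • u t)‖ := by
            rw [dist_comm, dist_eq_norm, map_smul, sub_sub]
        _ ≤ ε * ‖h • u t‖ := hlin t ht' _ ((hhu t ht').trans hu_small)
        _ ≤ ε * (‖h‖ * R) := mul_le_mul_of_nonneg_left (hhu t ht') hε)
    (fun t ht => by
      simpa [η, mem_closedBall, dist_eq_norm] using (hhu t (Ico_subset_Icc_self ht)).trans hu_small)
    (by simp [η, γ, hΦ0, hu0])
    b ⟨hb, le_rfl⟩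
  rw [zero_add, sub_zero, gronwallBound_zero_eq_mul] at hgron
  exact (dist_eq_norm _ _).symm.trans_le hgron

theorem hasDerivAt_flow_of_isIntegralCurveOn_variational
    (hv : ∀ t z, HasFDerivAt (v t) (Dv t z) z) (hDv : Continuous fun p : ℝ × E => Dv p.1 p.2)
    {Φ : ℝ → E → E} (hΦ : ∀ x, IsIntegralCurve (Φ · x) v) (hΦ0 : ∀ x, Φ 0 x = x)
    {x ξ : E} {b : ℝ} (hb : 0 ≤ b) {u : ℝ → E} (hu0 : u 0 = ξ)
    (hu : IsIntegralCurveOn u (fun t w => Dv t (Φ t x) w) (Icc 0 b)) :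
    HasDerivAt (fun h : ℝ => Φ b (x + h • ξ)) (u b) 0 := by
  have hγ : Continuous (Φ · x) := (hΦ x).continuous
  obtain ⟨K, δ, hδ, hlip⟩ := exists_lipschitzOnWith_closedBall hv hDv hγ 0 b
  obtain ⟨R, hR⟩ := isCompact_Icc.exists_bound_of_continuousOn hu.continuousOn
  have hR0 : 0 ≤ R := (norm_nonneg _).trans (hR 0 ⟨le_rfl, hb⟩)
  set C := gronwallBound 0 K 1 b
  have hC : 0 ≤ C := by
    simpa [C, gronwallBound_x0] using gronwallBound_mono le_rfl zero_le_one K.2 hb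
  have small : ∀ M ρ : ℝ, 0 < ρ → ∀ᶠ h : ℝ in 𝓝 0, ‖h‖ * M < ρ := fun M ρ hρ =>
    ((continuous_norm.mul continuous_const).tendsto' (0 : ℝ) 0 (by simp)).eventually
      (gt_mem_nhds hρ)
  rw [hasDerivAt_iff_isLittleO_nhds_zero, Asymptotics.isLittleO_iff]
  intro c hc
  set ε := c / (R * C + 1)
  obtain ⟨δ', hδ', hlin⟩ := exists_forall_norm_linearization_le hv hDv hγ 0 b
    (div_pos hc (by positivity) : 0 < ε)
  filter_upwards [small (‖ξ‖ * Real.exp (K * b)) (min δ δ') (lt_min hδ hδ'),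
    small R (min δ δ') (lt_min hδ hδ')] with h hξ hu_small
  have key := norm_flow_sub_linearization_le hΦ hΦ0 hb hu0 hu
    (fun t ht => (hlip t ht).mono (closedBall_subset_closedBall (min_le_left _ _)))
    (fun t ht w hw => hlin t ht w (hw.trans (min_le_right _ _))) (by positivity) hR hξ hu_small.le
  calc ‖Φ b (x + (0 + h) • ξ) - Φ b (x + (0 : ℝ) • ξ) - h • u b‖
        = ‖Φ b (x + h • ξ) - (Φ b x + h • u b)‖ := by simp [sub_sub]
    _ ≤ ε * (‖h‖ * R) * C := key
    _ = c * ‖h‖ * (R * C / (R * C + 1)) := by simp only [ε]; field_simp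
    _ ≤ c * ‖h‖ := mul_le_of_le_one_right (by positivity)
          ((div_le_one (by positivity)).2 (by linarith))

theorem fderiv_comp_eq_of_comp_flow_eq (hv : ∀ t z, HasFDerivAt (v t) (Dv t z) z)
    (hDv : Continuous fun p : ℝ × E => Dv p.1 p.2) {Φ : ℝ → E → E}
    (hΦ : ∀ x, IsIntegralCurve (Φ · x) v) (hΦ0 : ∀ x, Φ 0 x = x) {x : E} {t : ℝ} (ht : 0 ≤ t)
    {U : ℝ → E →L[ℝ] E} (hU0 : U 0 = .id ℝ E)
    (hU : ∀ s ∈ Icc 0 t, HasDerivWithinAt U (Dv s (Φ s x) ∘L U s) (Icc 0 t) s)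
    {F : Type*} [NormedAddCommGroup F] [NormedSpace ℝ F] {Y Y₀ : E → F}
    (hY : DifferentiableAt ℝ Y (Φ t x)) (hY₀ : DifferentiableAt ℝ Y₀ x)
    (hYΦ : ∀ x', Y (Φ t x') = Y₀ x') : fderiv ℝ Y (Φ t x) ∘L U t = fderiv ℝ Y₀ x := by
  ext1 ξ
  have hΦξ := hasDerivAt_flow_of_isIntegralCurveOn_variational hv hDv hΦ hΦ0 (x := x) (ξ := ξ) ht
    (u := fun s => U s ξ) (by simp [hU0])
    (fun s hs => ((hU s hs).clm_apply (hasDerivWithinAt_const s _ ξ)).congr_deriv (by simp))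
  have hlhs := hY.hasFDerivAt.comp_hasDerivAt_of_eq 0 hΦξ (by simp)
  have hrhs := hY₀.hasFDerivAt.comp_hasDerivAt_of_eq 0
    (((hasDerivAt_id' (0 : ℝ)).smul_const ξ).const_add x) (by simp)
  simp only [Function.comp_def, hYΦ] at hlhs
  simpa using hlhs.unique hrhs

end Linearization

theorem Matrix.hasDerivWithinAt_det_fin_three {M : ℝ → Matrix (Fin 3) (Fin 3) ℝ}
    {N : Matrix (Fin 3) (Fin 3) ℝ} {S : Set ℝ} {s : ℝ}
    (hM : ∀ i j, HasDerivWithinAt (fun τ => M τ i j) ((N * M s) i j) S s) :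
    HasDerivWithinAt (fun τ => (M τ).det) (N.trace * (M s).det) S s := by
  have H := (((((((hM 0 0).mul (hM 1 1)).mul (hM 2 2)).sub
      (((hM 0 0).mul (hM 1 2)).mul (hM 2 1))).sub
      (((hM 0 1).mul (hM 1 0)).mul (hM 2 2))).add
      (((hM 0 1).mul (hM 1 2)).mul (hM 2 0))).add
      (((hM 0 2).mul (hM 1 0)).mul (hM 2 1))).sub
      (((hM 0 2).mul (hM 1 1)).mul (hM 2 0))
  rw [show (fun τ => (M τ).det) = _ from funext fun τ => Matrix.det_fin_three (M τ)]
  refine H.congr_deriv ?_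
  simp only [Matrix.mul_apply, Fin.sum_univ_three, Matrix.trace_fin_three, Matrix.det_fin_three,
    Pi.mul_apply]
  ring

local notation "E3" => Fin 3 → ℝ

/-- Liouville's formula. -/
theorem hasDerivWithinAt_det_of_hasDerivWithinAt_comp {U : ℝ → E3 →L[ℝ] E3} {G : E3 →L[ℝ] E3}
    {S : Set ℝ} {s : ℝ} (hU : HasDerivWithinAt U (G ∘L U s) S s) :
    HasDerivWithinAt (fun τ => LinearMap.det (U τ : E3 →ₗ[ℝ] E3))
      (LinearMap.trace ℝ E3 G * LinearMap.det (U s : E3 →ₗ[ℝ] E3)) S s := by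
  simp only [← LinearMap.det_toMatrix']
  rw [LinearMap.trace_eq_matrix_trace ℝ (Pi.basisFun ℝ (Fin 3)), LinearMap.toMatrix_eq_toMatrix']
  refine Matrix.hasDerivWithinAt_det_fin_three fun i j => ?_
  rw [← LinearMap.toMatrix'_comp, LinearMap.toMatrix'_apply]
  simp only [LinearMap.toMatrix'_apply]
  exact ((hasDerivWithinAt_pi.1 (hU.clm_apply (hasDerivWithinAt_const _ _ _))) i).congr_deriv
    (by simp)

theorem divg_eq_trace {w : ℝ → E3 → E3} {t : ℝ} {z : E3} {L : E3 →L[ℝ] E3}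
    (h : HasFDerivAt (w t) L z) : divg w t z = LinearMap.trace ℝ E3 L := by
  rw [LinearMap.trace_eq_matrix_trace ℝ (Pi.basisFun ℝ (Fin 3)), LinearMap.toMatrix_eq_toMatrix',
    divg, Matrix.trace]
  refine Finset.sum_congr rfl fun i _ => ?_
  rw [Matrix.diag_apply, LinearMap.toMatrix'_apply]
  have := (h.comp_hasDerivAt_of_eq (z i) (hasDerivAt_update z i (z i)) (by simp))
  exact (hasDerivAt_pi.1 this i).deriv

theorem hasDerivAt_density_comp_integralCurve {ρ : ℝ → E3 → ℝ} {v : ℝ → E3 → E3}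
    {Dv : ℝ → E3 → E3 →L[ℝ] E3} (hρ : Differentiable ℝ fun q : ℝ × E3 => ρ q.1 q.2)
    (hv : ∀ t z, HasFDerivAt (v t) (Dv t z) z)
    (hcont : ∀ t z, deriv (fun s => ρ s z) t + divg (fun t z => ρ t z • v t z) t z = 0)
    {γ : ℝ → E3} (hγ : IsIntegralCurve γ v) (s : ℝ) :
    HasDerivAt (fun τ => ρ τ (γ τ))
      (-(LinearMap.trace ℝ E3 (Dv s (γ s)) * ρ s (γ s))) s := by
  set z := γ s
  set P := fderiv ℝ (fun q : ℝ × E3 => ρ q.1 q.2) (s, z)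
  have hP : HasFDerivAt (fun q : ℝ × E3 => ρ q.1 q.2) P (s, z) := (hρ _).hasFDerivAt
  have hρt : HasDerivAt (fun τ => ρ τ z) (P (1, 0)) s :=
    hP.comp_hasDerivAt_of_eq s ((hasDerivAt_id' s).prodMk (hasDerivAt_const s z)) rfl
  have hρz : HasFDerivAt (ρ s) (P ∘L .inr ℝ ℝ E3) z := hP.comp z (hasFDerivAt_prodMk_right s z)
  have hdiv : divg (fun t z => ρ t z • v t z) s z
      = ρ s z * LinearMap.trace ℝ E3 (Dv s z) + P (0, v s z) := by
    rw [divg_eq_trace (hρz.smul (hv s z))]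
    simp [LinearMap.trace_smulRight]
  have hcurve : HasDerivAt (fun τ => ρ τ (γ τ)) (P (1, v s z)) s :=
    hP.comp_hasDerivAt_of_eq s ((hasDerivAt_id' s).prodMk (hγ s)) rfl
  refine hcurve.congr_deriv ?_
  have := hcont s z
  rw [hρt.deriv, hdiv] at this
  rw [show ((1 : ℝ), v s z) = (1, 0) + (0, v s z) by simp, map_add]
  linarith

theorem density_mul_det_eq_of_variational {ρ : ℝ → E3 → ℝ} {v : ℝ → E3 → E3}
    {Dv : ℝ → E3 → E3 →L[ℝ] E3} (hρ : Differentiable ℝ fun q : ℝ × E3 => ρ q.1 q.2)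
    (hv : ∀ t z, HasFDerivAt (v t) (Dv t z) z)
    (hcont : ∀ t z, deriv (fun s => ρ s z) t + divg (fun t z => ρ t z • v t z) t z = 0)
    {γ : ℝ → E3} (hγ : IsIntegralCurve γ v) {t : ℝ} (ht : 0 ≤ t) {U : ℝ → E3 →L[ℝ] E3}
    (hU : ∀ s ∈ Icc 0 t, HasDerivWithinAt U (Dv s (γ s) ∘L U s) (Icc 0 t) s) :
    ρ t (γ t) * LinearMap.det (U t : E3 →ₗ[ℝ] E3)
      = ρ 0 (γ 0) * LinearMap.det (U 0 : E3 →ₗ[ℝ] E3) := by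
  have hργ := hasDerivAt_density_comp_integralCurve hρ hv hcont hγ
  have hdet := fun s hs => hasDerivWithinAt_det_of_hasDerivWithinAt_comp (hU s hs)
  refine constant_of_has_deriv_right_zero
    (fun s hs => (hργ s).continuousAt.continuousWithinAt.mul (hdet s hs).continuousWithinAt)
    (fun s hs => ?_) t ⟨ht, le_rfl⟩
  refine ((hργ s).hasDerivWithinAt.mul ((hdet s (Ico_subset_Icc_self hs)).mono_of_mem_nhdsWithin
    (Icc_mem_nhdsGE_of_mem hs))).congr_deriv ?_
  ring

theorem det_eq_of_hasFDerivAt_of_fix_coord_zero_one {f : E3 → E3} {A : E3 →L[ℝ] E3} {x : E3}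
    (hA : HasFDerivAt f A x) (h0 : ∀ w, f w 0 = w 0) (h1 : ∀ w, f w 1 = w 1) {c : ℝ}
    (h2 : HasDerivAt (fun s => f (Function.update x 2 s) 2) c (x 2)) :
    LinearMap.det (A : E3 →ₗ[ℝ] E3) = c := by
  have hrow : ∀ k, (∀ w, f w k = w k) → ∀ w, A w k = w k := fun k hk w => by
    have hcoord : HasFDerivAt (fun w : E3 => w k) ((ContinuousLinearMap.proj k).comp A) x := by
      simpa only [Function.comp_def, ContinuousLinearMap.proj_apply, hk] using
        (ContinuousLinearMap.proj (R := ℝ) (φ := fun _ : Fin 3 => ℝ) k).hasFDerivAt.comp x hA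
    exact congr($(hcoord.unique (hasFDerivAt_apply k x)) w)
  have h22 : A (Pi.single 2 1) 2 = c := by
    have := hA.comp_hasDerivAt_of_eq (x 2) (hasDerivAt_update x 2 (x 2)) (by simp)
    exact ((hasDerivAt_pi.1 this) 2).unique h2
  rw [← LinearMap.det_toMatrix', Matrix.det_fin_three]
  simp [LinearMap.toMatrix'_apply, hrow 0 h0, hrow 1 h1, h22]

theorem jacDet_eq_of_eq_integral {ρ₀ : E3 → ℝ} (hρ₀ : Continuous ρ₀) {f : E3 → E3}
    (hf : ∀ w, f w = ![w 0, w 1, ∫ σ in (0 : ℝ)..(w 2), ρ₀ ![w 0, w 1, σ]]) {x : E3}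
    (hfx : DifferentiableAt ℝ f x) : jacDet f x = ρ₀ x := by
  refine det_eq_of_hasFDerivAt_of_fix_coord_zero_one hfx.hasFDerivAt (by simp [hf])
    (by simp [hf]) ?_
  have hftc := (hρ₀.comp (by fun_prop : Continuous fun σ : ℝ => ![x 0, x 1, σ]))
    |>.integral_hasStrictDerivAt 0 (x 2)
  have hx : ![x 0, x 1, x 2] = x := by ext i; fin_cases i <;> rfl
  simpa [hf, Function.update_of_ne, hx] using hftc.hasDerivAt

theorem jacDet_eq_density_of_nonneg {ρ : ℝ → E3 → ℝ} {v : ℝ → E3 → E3} {Φ y : ℝ → E3 → E3}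
    (hρ : Differentiable ℝ fun q : ℝ × E3 => ρ q.1 q.2)
    (hv : ContDiff ℝ 1 fun q : ℝ × E3 => v q.1 q.2)
    (hflow : ∀ x, IsIntegralCurve (Φ · x) v) (hinit : ∀ x, Φ 0 x = x)
    (hcont : ∀ t z, deriv (fun s => ρ s z) t + divg (fun t z => ρ t z • v t z) t z = 0)
    (hy : Differentiable ℝ fun q : ℝ × E3 => y q.1 q.2)
    (hlag : ∀ t x, y t (Φ t x) = ![x 0, x 1, ∫ σ in (0 : ℝ)..(x 2), ρ 0 ![x 0, x 1, σ]])
    {t : ℝ} (ht : 0 ≤ t) {x : E3} (hρ0 : ρ 0 x ≠ 0) :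
    jacDet (y t) (Φ t x) = ρ t (Φ t x) := by
  set Dv : ℝ → E3 → E3 →L[ℝ] E3 :=
    fun s z => fderiv ℝ (fun q : ℝ × E3 => v q.1 q.2) (s, z) ∘L .inr ℝ ℝ E3
  have hDv : Continuous fun p : ℝ × E3 => Dv p.1 p.2 :=
    (hv.continuous_fderiv one_ne_zero).clm_comp continuous_const
  have hvz : ∀ s z, HasFDerivAt (v s) (Dv s z) z := fun s z =>
    ((hv.differentiable one_ne_zero) (s, z)).hasFDerivAt.comp z (hasFDerivAt_prodMk_right s z)
  have hyz : ∀ s z, DifferentiableAt ℝ (y s) z := fun s z =>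
    ((hy (s, z)).hasFDerivAt.comp z (hasFDerivAt_prodMk_right s z)).differentiableAt
  -- `U` solves the variational equation along `s ↦ Φ s x`, as an `End(ℝ³)`-valued linear ODE.
  obtain ⟨U, hU0, hU⟩ := exists_isIntegralCurveOn_clm
    (G := fun s => ContinuousLinearMap.compL ℝ E3 E3 E3 (Dv s (Φ s x)))
    ((ContinuousLinearMap.compL ℝ E3 E3 E3).continuous.comp
      (hDv.comp (continuous_id.prodMk (hflow x).continuous)))
    (ContinuousLinearMap.id ℝ E3) t
  replace hU : ∀ s ∈ Icc 0 t, HasDerivWithinAt U (Dv s (Φ s x) ∘L U s) (Icc 0 t) s := hU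
  have hchain := fderiv_comp_eq_of_comp_flow_eq hvz hDv hflow hinit ht hU0 hU (hyz t _) (hyz 0 x)
    fun x' => by rw [hlag, ← hlag 0, hinit]
  have hinit_det : jacDet (y 0) x = ρ 0 x :=
    jacDet_eq_of_eq_integral (ρ₀ := ρ 0)
      (hρ.continuous.comp (continuous_const.prodMk continuous_id))
      (fun w => by rw [← hlag 0 w, hinit]) (hyz 0 x)
  have hconst := density_mul_det_eq_of_variational hρ hvz hcont (hflow x) ht hU
  have hdet := congrArg LinearMap.det congr(($hchain : E3 →ₗ[ℝ] E3))
  rw [ContinuousLinearMap.toLinearMap_comp, LinearMap.det_comp] at hdet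
  simp only [hU0, hinit, ContinuousLinearMap.coe_id, LinearMap.det_id, mul_one] at hconst
  have hDt : LinearMap.det (U t : E3 →ₗ[ℝ] E3) ≠ 0 := fun h => hρ0 (by simpa [h] using hconst.symm)
  exact mul_right_cancel₀ hDt (hdet.trans (hinit_det.trans hconst.symm))

theorem divg_neg_comp_neg (w : ℝ → E3 → E3) (t : ℝ) (z : E3) :
    divg (fun t z => -w (-t) z) t z = -divg w (-t) z := by
  simp only [divg, Pi.neg_apply, deriv.fun_neg, Finset.sum_neg_distrib]

theorem jacDet_eq_density_of_nonpos {ρ : ℝ → E3 → ℝ} {v : ℝ → E3 → E3} {Φ y : ℝ → E3 → E3}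
    (hρ : Differentiable ℝ fun q : ℝ × E3 => ρ q.1 q.2)
    (hv : ContDiff ℝ 1 fun q : ℝ × E3 => v q.1 q.2)
    (hflow : ∀ x, IsIntegralCurve (Φ · x) v) (hinit : ∀ x, Φ 0 x = x)
    (hcont : ∀ t z, deriv (fun s => ρ s z) t + divg (fun t z => ρ t z • v t z) t z = 0)
    (hy : Differentiable ℝ fun q : ℝ × E3 => y q.1 q.2)
    (hlag : ∀ t x, y t (Φ t x) = ![x 0, x 1, ∫ σ in (0 : ℝ)..(x 2), ρ 0 ![x 0, x 1, σ]])
    {t : ℝ} (ht : t ≤ 0) {x : E3} (hρ0 : ρ 0 x ≠ 0) :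
    jacDet (y t) (Φ t x) = ρ t (Φ t x) := by
  -- `s ↦ Φ (-s)` is the flow of `-v (-s)`, and reversing time preserves every hypothesis.
  have hneg : ContDiff ℝ 1 fun q : ℝ × E3 => (-q.1, q.2) := contDiff_fst.neg.prodMk contDiff_snd
  have key := jacDet_eq_density_of_nonneg (ρ := fun s => ρ (-s)) (v := fun s z => -v (-s) z)
    (Φ := fun s => Φ (-s)) (y := fun s => y (-s))
    (hρ.comp (hneg.differentiable one_ne_zero)) (hv.comp hneg).neg
    (fun x s => by simpa [Function.comp_def] using (hflow x (-s)).scomp s (hasDerivAt_neg s))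
    (by simpa using hinit)
    (fun s z => by
      rw [deriv_comp_neg (f := fun s => ρ s z)]
      simp only [smul_neg, divg_neg_comp_neg (fun t z => ρ t z • v t z)]
      linarith [hcont (-s) z])
    (hy.comp (hneg.differentiable one_ne_zero)) (fun s => by simpa using hlag (-s))
    (neg_nonneg.2 ht)
    (x := x) (by simpa using hρ0)
  simpa using key

/-- with y₀(x) = (x₁, x₂, ∫₀^{x₃} ρ(0,x₁,x₂,σ)dσ), the Jacobian determinant
of the Lagrangian transformation equals the density: det(∂y/∂x)(t,z) = ρ(t,z). -/
theorem lagrangian_jacobian_eq_density (ρ : ℝ → (Fin 3 → ℝ) → ℝ)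
    (v : ℝ → (Fin 3 → ℝ) → (Fin 3 → ℝ)) (Φ : ℝ → (Fin 3 → ℝ) → (Fin 3 → ℝ))
    (y : ℝ → (Fin 3 → ℝ) → (Fin 3 → ℝ))
    (hρ : ContDiff ℝ 1 (fun q : ℝ × (Fin 3 → ℝ) => ρ q.1 q.2))
    (hρpos : ∀ t z, 0 < ρ t z)
    (hv : ContDiff ℝ 1 (fun q : ℝ × (Fin 3 → ℝ) => v q.1 q.2))
    (hflow : ∀ t x, HasDerivAt (fun s => Φ s x) (v t (Φ t x)) t)
    (hinit : ∀ x, Φ 0 x = x)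
    (hcont : ∀ t z, deriv (fun s => ρ s z) t
      + divg (fun t z => ρ t z • v t z) t z = 0)
    (hy : ContDiff ℝ 1 (fun q : ℝ × (Fin 3 → ℝ) => y q.1 q.2))
    (hlag : ∀ t x, y t (Φ t x)
      = ![x 0, x 1, ∫ σ in (0 : ℝ)..(x 2), ρ 0 ![x 0, x 1, σ]]) :
    ∀ t, ∀ z ∈ Set.range (Φ t), jacDet (y t) z = ρ t z := by
  have hρd := hρ.differentiable one_ne_zero
  have hyd := hy.differentiable one_ne_zero
  have hflow' : ∀ x, IsIntegralCurve (Φ · x) v := fun x s => hflow s x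
  rintro t _ ⟨x, rfl⟩
  rcases le_total 0 t with ht | ht
  · exact jacDet_eq_density_of_nonneg hρd hv hflow' hinit hcont hyd hlag ht (hρpos 0 x).ne'
  · exact jacDet_eq_density_of_nonpos hρd hv hflow' hinit hcont hyd hlag ht (hρpos 0 x).ne'
end
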